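/- arXiv:2011.03396 — 4 statements merged into one kernel-verified Lean document; each statement's English description precedes it below -/
import Mathlib

section
/- Let S, O¹, O² be nonempty finite sets with |S| ≥ 2, and let C¹ be a channel from S to O¹ and C² a channel from S to O². Then the parallel composition C¹ ‖ C² satisfies β*(C¹ ‖ C²) ≥ β*(C¹) · β*(C²). -/
/-- A channel from secrets `S` to outputs `O`: nonnegative entries, rows sum to 1. -/
def IsChannel {S O : Type*} [Fintype O] (C : S → O → ℝ) : Prop :=
  (∀ s o, 0 ≤ C s o) ∧ ∀ s, ∑ o, C s o = 1

/-- A prior on `S`: nonnegative, sums to 1. -/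
def IsPrior {S : Type*} [Fintype S] (π : S → ℝ) : Prop :=
  (∀ s, 0 ≤ π s) ∧ ∑ s, π s = 1

/-- Bayes risk `R*(π, C) = 1 − ∑_o max_s (π s · C s o)`. -/
noncomputable def bayesRisk {S O : Type*} [Fintype S] [Nonempty S] [Fintype O]
    (π : S → ℝ) (C : S → O → ℝ) : ℝ :=
  1 - ∑ o, Finset.univ.sup' Finset.univ_nonempty (fun s => π s * C s o)

/-- Guessing error `G(π) = 1 − max_s π s`. -/
noncomputable def guessErr {S : Type*} [Fintype S] [Nonempty S] (π : S → ℝ) : ℝ :=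
  1 - Finset.univ.sup' Finset.univ_nonempty π

/-- Multiplicative Bayes risk leakage `β(π, C) = R*(π, C) / G(π)`. -/
noncomputable def betaL {S O : Type*} [Fintype S] [Nonempty S] [Fintype O]
    (π : S → ℝ) (C : S → O → ℝ) : ℝ :=
  bayesRisk π C / guessErr π

/-- The prior `π_{ab}` assigning 1/2 to each of `a` and `b` and 0 elsewhere. -/
noncomputable def pairPrior {S : Type*} [DecidableEq S] (a b : S) : S → ℝ :=
  fun s => if s = a ∨ s = b then 1 / 2 else 0

/-- Bayes security `β*(C)`: the minimum of `β(π_{ab}, C)` over distinct pairs `a ≠ b`. -/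
noncomputable def betaStar {S O : Type*} [Fintype S] [Nonempty S] [DecidableEq S] [Fintype O]
    (C : S → O → ℝ) (h : 1 < Fintype.card S) : ℝ :=
  (Finset.univ.filter (fun p : S × S => p.1 ≠ p.2)).inf'
    (by
      obtain ⟨a, b, hab⟩ := Fintype.exists_pair_of_one_lt_card h
      exact ⟨(a, b), by simp [hab]⟩)
    (fun p => betaL (pairPrior p.1 p.2) C)

/-- Parallel composition of two channels sharing the same input. -/
noncomputable def parComp {S O₁ O₂ : Type*} (C₁ : S → O₁ → ℝ) (C₂ : S → O₂ → ℝ) :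
    S → O₁ × O₂ → ℝ :=
  fun s p => C₁ s p.1 * C₂ s p.2

lemma betaL_pair {S O : Type*} [Fintype S] [Nonempty S] [DecidableEq S] [Fintype O]
    (C : S → O → ℝ) (hC : IsChannel C) (a b : S) :
    betaL (pairPrior a b) C = ∑ o, min (C a o) (C b o) := by
  have hsup : ∀ o : O, Finset.univ.sup' Finset.univ_nonempty
      (fun s => pairPrior a b s * C s o) = (1/2) * max (C a o) (C b o) := by
    intro o
    apply le_antisymm
    · apply Finset.sup'_le
      intro s _
      by_cases h : s = a ∨ s = b
      · rcases h with h | h <;> subst h <;> simp [pairPrior] <;>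
          nlinarith [le_max_left (C s o) (C b o), le_max_right (C a o) (C s o)]
      · have h0 : pairPrior a b s = 0 := by simp [pairPrior, h]
        rw [h0, zero_mul]
        nlinarith [hC.1 a o, hC.1 b o, le_max_left (C a o) (C b o)]
    · rcases max_cases (C a o) (C b o) with ⟨h, _⟩ | ⟨h, _⟩
      · rw [h]
        calc (1/2) * C a o = pairPrior a b a * C a o := by simp [pairPrior]
        _ ≤ _ := Finset.le_sup' (fun s => pairPrior a b s * C s o) (Finset.mem_univ a)
      · rw [h]
        calc (1/2) * C b o = pairPrior a b b * C b o := by simp [pairPrior]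
        _ ≤ _ := Finset.le_sup' (fun s => pairPrior a b s * C s o) (Finset.mem_univ b)
  have hg : Finset.univ.sup' Finset.univ_nonempty (pairPrior a b) = 1/2 := by
    apply le_antisymm
    · apply Finset.sup'_le
      intro s _
      by_cases h : s = a ∨ s = b <;> simp [pairPrior, h] <;> norm_num
    · calc (1/2 : ℝ) = pairPrior a b a := by simp [pairPrior]
      _ ≤ _ := Finset.le_sup' _ (Finset.mem_univ a)
  have hmaxsum : ∑ o, max (C a o) (C b o) = 2 - ∑ o, min (C a o) (C b o) := by
    have : ∀ o, max (C a o) (C b o) = C a o + C b o - min (C a o) (C b o) := by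
      intro o; rw [← min_add_max (C a o) (C b o)]; ring
    simp only [this]
    rw [Finset.sum_sub_distrib, Finset.sum_add_distrib, hC.2 a, hC.2 b]
    norm_num
  simp only [betaL, bayesRisk, guessErr, hsup, hg, ← Finset.mul_sum, hmaxsum]
  ring

lemma betaStar_nonneg {S O : Type*} [Fintype S] [Nonempty S] [DecidableEq S] [Fintype O]
    (hS : 1 < Fintype.card S) (C : S → O → ℝ) (hC : IsChannel C) :
    (0 : ℝ) ≤ betaStar C hS := by
  apply Finset.le_inf'
  intro p _
  rw [betaL_pair C hC p.1 p.2]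
  exact Finset.sum_nonneg fun o _ => le_min (hC.1 p.1 o) (hC.1 p.2 o)

/-- `β*(C¹ ‖ C²) ≥ β*(C¹) · β*(C²)`. -/
theorem betaStar_parComp {S O₁ O₂ : Type*} [Fintype S] [Nonempty S] [DecidableEq S]
    [Fintype O₁] [Nonempty O₁] [Fintype O₂] [Nonempty O₂]
    (hS : 1 < Fintype.card S)
    (C₁ : S → O₁ → ℝ) (hC₁ : IsChannel C₁) (C₂ : S → O₂ → ℝ) (hC₂ : IsChannel C₂) :
    betaStar C₁ hS * betaStar C₂ hS ≤ betaStar (parComp C₁ C₂) hS := by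
  have hpar : IsChannel (parComp C₁ C₂) := by
    constructor
    · intro s o; exact mul_nonneg (hC₁.1 s o.1) (hC₂.1 s o.2)
    · intro s
      rw [Fintype.sum_prod_type]
      simp only [parComp, ← Finset.mul_sum, hC₂.2 s, mul_one, hC₁.2 s]
  apply Finset.le_inf'
  intro p hp
  have h1 : betaStar C₁ hS ≤ betaL (pairPrior p.1 p.2) C₁ := Finset.inf'_le _ hp
  have h2 : betaStar C₂ hS ≤ betaL (pairPrior p.1 p.2) C₂ := Finset.inf'_le _ hp
  have hb1 : (0:ℝ) ≤ betaL (pairPrior p.1 p.2) C₁ := le_trans (betaStar_nonneg hS C₁ hC₁) h1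
  have key : betaL (pairPrior p.1 p.2) C₁ * betaL (pairPrior p.1 p.2) C₂ ≤
      betaL (pairPrior p.1 p.2) (parComp C₁ C₂) := by
    rw [betaL_pair C₁ hC₁, betaL_pair C₂ hC₂, betaL_pair _ hpar, Finset.sum_mul_sum,
      Fintype.sum_prod_type]
    apply Finset.sum_le_sum
    intro o₁ _
    apply Finset.sum_le_sum
    intro o₂ _
    simp only [parComp]
    exact le_min
      (mul_le_mul (min_le_left _ _) (min_le_left _ _)
        (le_min (hC₂.1 p.1 o₂) (hC₂.1 p.2 o₂)) (hC₁.1 p.1 o₁))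
      (mul_le_mul (min_le_right _ _) (min_le_right _ _)
        (le_min (hC₂.1 p.1 o₂) (hC₂.1 p.2 o₂)) (hC₁.1 p.2 o₁))
  calc betaStar C₁ hS * betaStar C₂ hS
      ≤ betaL (pairPrior p.1 p.2) C₁ * betaL (pairPrior p.1 p.2) C₂ :=
        mul_le_mul h1 h2 (betaStar_nonneg hS C₂ hC₂) hb1
    _ ≤ _ := key
end

section
/- Let S and O be nonempty finite sets with |S| ≥ 2, let ε ≥ 0, and let C be a channel from S to O that is ε-LDP, i.e., C s o ≤ exp(ε) · C s' o for all s, s' ∈ S and o ∈ O. Then for every prior π on S with G(π) > 0, one has β(π, C) ≥ 2 / (1 + exp(ε)). -/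
/-- A channel is `ε`-LDP if `C s o ≤ exp(ε) · C s' o` for all secrets `s, s'` and outputs `o`. -/
def IsLDP {S O : Type*} (ε : ℝ) (C : S → O → ℝ) : Prop :=
  ∀ s s' o, C s o ≤ Real.exp ε * C s' o

open Finset

lemma IsLDP.one_add_exp_mul_sum_max_le {S O : Type*} [Fintype O] {ε : ℝ} {C : S → O → ℝ}
    (hC : IsLDP ε C) (s s' : S) :
    (1 + Real.exp ε) * ∑ o, max (C s o) (C s' o)
      ≤ Real.exp ε * (∑ o, C s o + ∑ o, C s' o) := by
  rw [mul_sum, ← sum_add_distrib, mul_sum]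
  refine sum_le_sum fun o _ => ?_
  rcases max_cases (C s o) (C s' o) with ⟨h, -⟩ | ⟨h, -⟩ <;> rw [h] <;>
    linarith [hC s s' o, hC s' s o]

section

variable {S O : Type*} [Fintype S] [Nonempty S] [Fintype O]

lemma sup'_mul_le_of_isMax {π x : S → ℝ} (hπ : ∀ s, 0 ≤ π s) {a : S} (ha : ∀ s, π s ≤ π a)
    (hxa : 0 ≤ x a) :
    univ.sup' univ_nonempty (fun s => π s * x s)
      ≤ π a * x a + ∑ s, π s * (max (x a) (x s) - x a) := by
  refine sup'_le _ _ fun t _ => ?_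
  have hterm : π t * (max (x a) (x t) - x a) ≤ ∑ s, π s * (max (x a) (x s) - x a) :=
    single_le_sum (f := fun s => π s * (max (x a) (x s) - x a))
      (fun s _ => mul_nonneg (hπ s) (sub_nonneg.2 (le_max_left _ _))) (mem_univ t)
  calc π t * x t ≤ π t * max (x a) (x t) := mul_le_mul_of_nonneg_left (le_max_right _ _) (hπ t)
    _ = π t * x a + π t * (max (x a) (x t) - x a) := by ring
    _ ≤ π a * x a + ∑ s, π s * (max (x a) (x s) - x a) :=
        add_le_add (mul_le_mul_of_nonneg_right (ha t) hxa) hterm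

lemma guessErr_mul_le_bayesRisk {C : S → O → ℝ} (hC : IsChannel C) {π : S → ℝ}
    (hπ : IsPrior π) {t : ℝ} (hTV : ∀ s s', ∑ o, max (C s o) (C s' o) ≤ 1 + t) :
    guessErr π * (1 - t) ≤ bayesRisk π C := by
  classical
  obtain ⟨a, -, haM⟩ := exists_mem_eq_sup' (univ_nonempty (α := S)) π
  have ha : ∀ s, π s ≤ π a := fun s => haM ▸ le_sup' π (mem_univ s)
  have hsuccess : ∑ o, univ.sup' univ_nonempty (fun s => π s * C s o)
      ≤ π a + ∑ s, π s * (∑ o, max (C a o) (C s o) - 1) :=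
    calc _ ≤ ∑ o, (π a * C a o + ∑ s, π s * (max (C a o) (C s o) - C a o)) :=
          sum_le_sum fun o _ => sup'_mul_le_of_isMax hπ.1 ha (hC.1 a o)
      _ = π a + ∑ s, π s * (∑ o, max (C a o) (C s o) - 1) := by
          simp only [sum_add_distrib, ← mul_sum, hC.2 a, mul_one, sum_comm (γ := O),
            sum_sub_distrib]
  have hrest : ∑ s, π s * (∑ o, max (C a o) (C s o) - 1) ≤ (1 - π a) * t := by
    rw [← add_sum_erase _ _ (mem_univ a)]
    simp only [max_self, hC.2 a, sub_self, mul_zero, zero_add]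
    calc _ ≤ ∑ s ∈ univ.erase a, π s * t :=
          sum_le_sum fun s _ => mul_le_mul_of_nonneg_left (by linarith [hTV a s]) (hπ.1 s)
      _ = (1 - π a) * t := by
          rw [← sum_mul, ← hπ.2, ← add_sum_erase _ _ (mem_univ a), add_sub_cancel_left]
  rw [bayesRisk, guessErr, haM]
  linarith

end

theorem ldp_lower_bound_beta_general {S O : Type*} [Fintype S] [Nonempty S] [Fintype O]
    (ε : ℝ) (C : S → O → ℝ) (hC : IsChannel C) (hLDP : IsLDP ε C)
    (π : S → ℝ) (hπ : IsPrior π) (hG : 0 < guessErr π) :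
    2 / (1 + Real.exp ε) ≤ betaL π C := by
  have hTV : ∀ s s', ∑ o, max (C s o) (C s' o) ≤ 1 + (1 - 2 / (1 + Real.exp ε)) := by
    intro s s'
    have h := hLDP.one_add_exp_mul_sum_max_le s s'
    rw [hC.2 s, hC.2 s', mul_comm] at h
    rw [← sub_nonneg] at h ⊢
    field_simp
    linarith
  rw [betaL, le_div_iff₀ hG, mul_comm]
  simpa using guessErr_mul_le_bayesRisk hC hπ hTV

/-- if `C` is `ε`-LDP then `β(π, C) ≥ 2 / (1 + exp ε)` for every prior `π`
with positive guessing error. -/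
theorem ldp_lower_bound_beta {S O : Type*} [Fintype S] [Nonempty S] [Fintype O] [Nonempty O]
    (hS : 1 < Fintype.card S) (ε : ℝ) (hε : 0 ≤ ε)
    (C : S → O → ℝ) (hC : IsChannel C) (hLDP : IsLDP ε C)
    (π : S → ℝ) (hπ : IsPrior π) (hG : 0 < guessErr π) :
    2 / (1 + Real.exp ε) ≤ betaL π C :=
  ldp_lower_bound_beta_general ε C hC hLDP π hπ hG
end

section
/- Let S and O be nonempty finite sets with |S| ≥ 2 and let C be a channel from S to O. Then C is (0, δ)-LDP with δ = 1 − β*(C): for all a, b ∈ S and every subset O' ⊆ O, one has ∑_{o ∈ O'} (C a o − C b o) ≤ 1 − β*(C). -/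
/-! For `a ≠ b` the pair prior gives `β(π_{ab}, C) ≤ 2 − ∑_o max (C a o) (C b o)`, while, the rows
of `C` summing to 1, `∑_{o ∈ O'} (C a o − C b o) ≤ ∑_o max (C a o) (C b o) − 1`; adding the two
bounds gives the claim (both are in fact equalities, with the total variation distance between
`C a` and `C b` as common value). -/

theorem sum_sub_le_sum_max_sub_sum {O : Type*} [Fintype O] (p q : O → ℝ) (O' : Finset O) :
    ∑ o ∈ O', (p o - q o) ≤ ∑ o, max (p o) (q o) - ∑ o, q o := by
  rw [← Finset.sum_sub_distrib]
  calc ∑ o ∈ O', (p o - q o) ≤ ∑ o ∈ O', (max (p o) (q o) - q o) :=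
        Finset.sum_le_sum fun o _ => sub_le_sub_right (le_max_left _ _) _
    _ ≤ ∑ o, (max (p o) (q o) - q o) :=
        Finset.sum_le_sum_of_subset_of_nonneg (Finset.subset_univ O')
          fun o _ _ => sub_nonneg.2 (le_max_right _ _)

section PairPrior

variable {S O : Type*} [Fintype S] [Nonempty S] [DecidableEq S]

theorem sup'_pairPrior (a b : S) :
    Finset.univ.sup' Finset.univ_nonempty (pairPrior a b) = 1 / 2 :=
  le_antisymm
    (Finset.sup'_le _ _ fun s _ => by unfold pairPrior; split_ifs <;> norm_num)
    (le_of_eq_of_le (by simp [pairPrior]) (Finset.le_sup' _ (Finset.mem_univ a)))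

theorem guessErr_pairPrior (a b : S) : guessErr (pairPrior a b) = 1 / 2 := by
  rw [guessErr, sup'_pairPrior]
  norm_num

theorem half_mul_max_le_sup'_pairPrior_mul (C : S → O → ℝ) (a b : S) (o : O) :
    1 / 2 * max (C a o) (C b o) ≤
      Finset.univ.sup' Finset.univ_nonempty (fun s => pairPrior a b s * C s o) := by
  rw [mul_max_of_nonneg _ _ (by norm_num)]
  refine max_le ?_ ?_
  · exact le_of_eq_of_le (by simp [pairPrior]) (Finset.le_sup' _ (Finset.mem_univ a))
  · exact le_of_eq_of_le (by simp [pairPrior]) (Finset.le_sup' _ (Finset.mem_univ b))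

theorem betaL_pairPrior_le [Fintype O] (C : S → O → ℝ) (a b : S) :
    betaL (pairPrior a b) C ≤ 2 - ∑ o, max (C a o) (C b o) := by
  have hsum : 1 / 2 * ∑ o, max (C a o) (C b o) ≤
      ∑ o, Finset.univ.sup' Finset.univ_nonempty (fun s => pairPrior a b s * C s o) := by
    rw [Finset.mul_sum]
    exact Finset.sum_le_sum fun o _ => half_mul_max_le_sup'_pairPrior_mul C a b o
  rw [betaL, bayesRisk, guessErr_pairPrior, div_le_iff₀ (by norm_num)]
  linarith

theorem betaStar_le_betaL_pairPrior [Fintype O] (C : S → O → ℝ) (h : 1 < Fintype.card S)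
    {a b : S} (hab : a ≠ b) : betaStar C h ≤ betaL (pairPrior a b) C := by
  have hmem : (a, b) ∈ Finset.univ.filter (fun p : S × S => p.1 ≠ p.2) :=
    Finset.mem_filter.2 ⟨Finset.mem_univ _, hab⟩
  exact Finset.inf'_le (fun p : S × S => betaL (pairPrior p.1 p.2) C) hmem

theorem betaStar_le_two_sub_sum_max [Fintype O] (C : S → O → ℝ) (h : 1 < Fintype.card S)
    {a b : S} (hab : a ≠ b) : betaStar C h ≤ 2 - ∑ o, max (C a o) (C b o) :=
  (betaStar_le_betaL_pairPrior C h hab).trans (betaL_pairPrior_le C a b)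

end PairPrior

theorem betaStar_zero_delta_LDP_general {S O : Type*} [Fintype S] [Nonempty S] [DecidableEq S]
    [Fintype O]
    (hS : 1 < Fintype.card S) (C : S → O → ℝ) (hC : IsChannel C)
    (a b : S) (O' : Finset O) :
    ∑ o ∈ O', (C a o - C b o) ≤ 1 - betaStar C hS := by
  have hsum_le := fun x y (O' : Finset O) => by
    simpa only [hC.2 y] using sum_sub_le_sum_max_sub_sum (C x) (C y) O'
  by_cases hab : a = b
  · -- `β* ≤ 1`, witnessed by any distinct pair
    subst hab
    obtain ⟨x, y, hxy⟩ := Fintype.exists_pair_of_one_lt_card hS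
    have hle := betaStar_le_two_sub_sum_max C hS hxy
    have hmax := hsum_le x y ∅
    rw [Finset.sum_empty] at hmax
    simp only [sub_self, Finset.sum_const_zero]
    linarith
  · linarith [betaStar_le_two_sub_sum_max C hS hab, hsum_le a b O']

/-- a `β*`-secure channel is `(0, δ)`-LDP with `δ = 1 − β*(C)`:
for all secrets `a, b` and every subset `O'` of outputs,
`∑_{o ∈ O'} (C a o − C b o) ≤ 1 − β*(C)`. -/
theorem betaStar_zero_delta_LDP {S O : Type*} [Fintype S] [Nonempty S] [DecidableEq S]
    [Fintype O] [Nonempty O]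
    (hS : 1 < Fintype.card S) (C : S → O → ℝ) (hC : IsChannel C)
    (a b : S) (O' : Finset O) :
    ∑ o ∈ O', (C a o - C b o) ≤ 1 - betaStar C hS :=
  betaStar_zero_delta_LDP_general hS C hC a b O'
end

section
/- For every n ≥ 2 and every k with 2 ≤ k ≤ n, there exist a finite output set O, a channel C from a secret set S with |S| = n to O, and a prior π on S with exactly k nonzero components, such that β(π, C) = 0 and β(υ, C) = (1 − k/n) / (1 − 1/n), where υ is the uniform prior on S; that is, the upper bound (1 − k/n)/(1 − 1/n) on β(υ, C) for channels with β(π, C) = 0 is attained. -/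
/-
The channel collapses all secrets onto `k` outputs, `k` of the secrets being sent to distinct
outputs and the rest anywhere. The uniform prior on those `k` secrets is then revealed exactly,
so its Bayes risk is `0`, while under the uniform prior on all `n` secrets each of the `k` columns
has maximum `1/n`, so the Bayes risk is `1 - k/n`; the guessing error of that prior is `1 - 1/n`.
-/

open Finset

def deterministicChannel {S O : Type*} [DecidableEq O] (f : S → O) : S → O → ℝ :=
  fun s o => if f s = o then 1 else 0

noncomputable def uniformPriorOn {S : Type*} [DecidableEq S] (T : Finset S) : S → ℝ :=
  fun s => if s ∈ T then 1 / #T else 0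

section Channel

variable {S O : Type*} [DecidableEq O]

theorem isChannel_deterministicChannel [Fintype O] (f : S → O) :
    IsChannel (deterministicChannel f) :=
  ⟨fun s o => by unfold deterministicChannel; split_ifs <;> norm_num,
    fun s => by simp [deterministicChannel]⟩

theorem sup'_mul_deterministicChannel [Fintype S] [Nonempty S] {f : S → O} {π : S → ℝ} {v : ℝ}
    (hv : 0 ≤ v) (hle : ∀ s, π s ≤ v) {o : O} {s₀ : S} (hfs₀ : f s₀ = o) (hπs₀ : π s₀ = v) :
    univ.sup' univ_nonempty (fun s => π s * deterministicChannel f s o) = v := by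
  refine le_antisymm (sup'_le _ _ fun s _ => ?_) ?_
  · unfold deterministicChannel
    split_ifs <;> simp [hle s, hv]
  · calc v = π s₀ * deterministicChannel f s₀ o := by simp [deterministicChannel, hfs₀, hπs₀]
      _ ≤ _ := le_sup' (fun s => π s * deterministicChannel f s o) (mem_univ s₀)

theorem bayesRisk_deterministicChannel [Fintype S] [Nonempty S] [Fintype O] {f : S → O}
    {π : S → ℝ} {v : ℝ} (hv : 0 ≤ v) (hle : ∀ s, π s ≤ v) (hmax : ∀ o, ∃ s, f s = o ∧ π s = v) :
    bayesRisk π (deterministicChannel f) = 1 - Fintype.card O * v := by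
  have hcol : ∀ o, univ.sup' univ_nonempty (fun s => π s * deterministicChannel f s o) = v :=
    fun o => by
      obtain ⟨s₀, hfs₀, hπs₀⟩ := hmax o
      exact sup'_mul_deterministicChannel hv hle hfs₀ hπs₀
  simp only [bayesRisk, hcol, sum_const, card_univ, nsmul_eq_mul]

end Channel

section Prior

variable {S : Type*} [Fintype S]

theorem isPrior_uniformPriorOn [DecidableEq S] {T : Finset S} (hT : T.Nonempty) :
    IsPrior (uniformPriorOn T) := by
  refine ⟨fun s => by unfold uniformPriorOn; split_ifs <;> positivity, ?_⟩
  have hT : (#T : ℝ) ≠ 0 := by exact_mod_cast hT.card_pos.ne'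
  simp [uniformPriorOn, sum_ite_mem, hT]

theorem filter_uniformPriorOn_pos [DecidableEq S] (T : Finset S) :
    univ.filter (fun s => 0 < uniformPriorOn T s) = T := by
  ext s
  by_cases hs : s ∈ T
  · have : 0 < #T := card_pos.mpr ⟨s, hs⟩
    simp [uniformPriorOn, hs, this]
  · simp [uniformPriorOn, hs]

theorem guessErr_const [Nonempty S] (c : ℝ) : guessErr (fun _ : S => c) = 1 - c := by
  rw [guessErr, sup'_const]

end Prior

section Embedding

variable {S O : Type*} [Fintype S] [Fintype O] [DecidableEq O] [Nonempty O] (e : O ↪ S)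

noncomputable def retractionChannel : S → O → ℝ :=
  deterministicChannel (Function.invFun e)

theorem bayesRisk_uniformPriorOn_map_retractionChannel [DecidableEq S] [Nonempty S] :
    bayesRisk (uniformPriorOn (univ.map e)) (retractionChannel e) = 0 := by
  have hcard : #(univ.map e) = Fintype.card O := by rw [card_map, card_univ]
  have hO : (Fintype.card O : ℝ) ≠ 0 := by exact_mod_cast Fintype.card_ne_zero
  rw [retractionChannel, bayesRisk_deterministicChannel (v := 1 / Fintype.card O) (by positivity)]
  · rw [mul_one_div_cancel hO, sub_self]
  · intro s
    unfold uniformPriorOn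
    split_ifs <;> simp [hcard]
  · exact fun o => ⟨e o, Function.leftInverse_invFun e.injective o, by
      simp [uniformPriorOn, hcard]⟩

theorem bayesRisk_const_retractionChannel [Nonempty S] :
    bayesRisk (fun _ => 1 / (Fintype.card S : ℝ)) (retractionChannel e) =
      1 - Fintype.card O / Fintype.card S := by
  rw [retractionChannel, bayesRisk_deterministicChannel (by positivity) (fun _ => le_rfl)
    fun o => ⟨e o, Function.leftInverse_invFun e.injective o, rfl⟩]
  ring

end Embedding

/-- the bound `β(υ, C) ≤ (1 − k/n)/(1 − 1/n)` is attained: for every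
`n ≥ 2` and `2 ≤ k ≤ n` there are a finite nonempty output set `Fin (m + 1)`, a channel
`C` on `n` secrets and a prior `π` with exactly `k` nonzero components such that
`β(π, C) = 0` and `β(υ, C) = (1 − k/n)/(1 − 1/n)`. -/
theorem beta_uniform_upper_bound_tight (n k : ℕ) (hk2 : 2 ≤ k) (hkn : k ≤ n) :
    ∃ (m : ℕ) (C : Fin n → Fin (m + 1) → ℝ) (π : Fin n → ℝ),
      IsChannel C ∧ IsPrior π ∧
      (Finset.univ.filter fun s => 0 < π s).card = k ∧
      @betaL (Fin n) (Fin (m + 1)) _ ⟨⟨0, by omega⟩⟩ _ π C = 0 ∧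
      @betaL (Fin n) (Fin (m + 1)) _ ⟨⟨0, by omega⟩⟩ _ (fun _ => (1 : ℝ) / n) C
        = (1 - (k : ℝ) / n) / (1 - 1 / n) := by
  obtain ⟨m, rfl⟩ : ∃ m, k = m + 1 := ⟨k - 1, by omega⟩
  have : Nonempty (Fin n) := ⟨⟨0, by omega⟩⟩
  let e := Fin.castLEEmb hkn
  refine ⟨m, retractionChannel e, uniformPriorOn (univ.map e),
    isChannel_deterministicChannel _, isPrior_uniformPriorOn univ_nonempty.map, ?_, ?_, ?_⟩
  · rw [filter_uniformPriorOn_pos, card_map, card_univ, Fintype.card_fin]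
  · rw [betaL, bayesRisk_uniformPriorOn_map_retractionChannel, zero_div]
  · have hrisk := bayesRisk_const_retractionChannel e
    simp only [Fintype.card_fin] at hrisk
    rw [betaL, hrisk, guessErr_const]
end
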